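/- Assume C has full span and let χ : ℝ^C → ℝ^N be the equitable solution, i.e., χ(v) = τ(ψ, γ) for any representation (ψ, γ) of v (this is well-defined by the invariance of the equitable solution across representations). If player i is a dummy in the game v : C → ℝ, then χ_i(v) = 0. -/

import Mathlib

open Finset
open scoped Classical

/-! Common definitions: games on a collection `C` of coalitions of a finite
player set `N`, MM-games, full span, assignments, representations, the
equitable solution, and the Shapley value. -/

/-- The MM-game `w_S`, as a vector in `ℝ^C`:
`w_S(T) = 1` if `S` meets `T` (i.e. `S ∩ T ≠ ∅`) and `0` if `S` misses `T`. -/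
noncomputable def mmGame {N : Type} [DecidableEq N] (C : Finset (Finset N))
    (S : Finset N) : {T : Finset N // T ∈ C} → ℝ :=
  fun T => if (S ∩ T.1).Nonempty then 1 else 0

/-- `C` has full span: the family of MM-games `{w_S}_{S ∈ C}` is a basis of `ℝ^C`,
i.e. it is linearly independent and spans `ℝ^C`. -/
def FullSpan {N : Type} [DecidableEq N] (C : Finset (Finset N)) : Prop :=
  LinearIndependent ℝ (fun S : {S : Finset N // S ∈ C} => mmGame C S.1) ∧
  Submodule.span ℝ (Set.range fun S : {S : Finset N // S ∈ C} => mmGame C S.1) = ⊤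

/-- The full user-set `ψ⁻¹(k) = {n ∈ N : k ∈ ψ(n)}` of facility `k`. -/
noncomputable def userSet {N K : Type} [Fintype N] (ψ : N → Finset K) (k : K) :
    Finset N :=
  Finset.univ.filter fun n => k ∈ ψ n

/-- `(ψ, γ)` is a representation of the game `v : C → ℝ`.  The set of facilities
is `K = ψ(N) = ⋃_{n ∈ N} ψ(n)` (every facility has a nonempty full user-set);
we require `ψ⁻¹(k) ∈ C` for every facility `k`, and
`v(S) = ∑_{k ∈ ψ(S)} γ(k)` for every `S ∈ C`, where `ψ(S) = ⋃_{n ∈ S} ψ(n)`. -/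
def IsRep {N : Type} [Fintype N] [DecidableEq N] (C : Finset (Finset N))
    (v : {T : Finset N // T ∈ C} → ℝ) {K : Type} (ψ : N → Finset K)
    (γ : K → ℝ) : Prop :=
  (∀ k ∈ Finset.univ.biUnion ψ, userSet ψ k ∈ C) ∧
  ∀ T : {T : Finset N // T ∈ C}, v T = ∑ k ∈ T.1.biUnion ψ, γ k

/-- The equitable solution `τ(ψ, γ) ∈ ℝ^N`:
`τ_n(ψ,γ) = ∑_{k ∈ ψ(n)} γ(k)/|ψ⁻¹(k)|`. -/
noncomputable def tau {N K : Type} [Fintype N] (ψ : N → Finset K) (γ : K → ℝ)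
    (n : N) : ℝ :=
  ∑ k ∈ ψ n, γ k / ((userSet ψ k).card : ℝ)

/-- The Shapley value `φ_n(v)` of a game on all coalitions of `N`
(`v ∅` is understood to be `0`):
`φ_n(v) = ∑_{S ⊆ N∖{n}} (|S|!(|N|−1−|S|)!/|N|!)·(v(S∪{n}) − v(S))`. -/
noncomputable def shapley {N : Type} [Fintype N] [DecidableEq N]
    (v : Finset N → ℝ) (n : N) : ℝ :=
  ∑ S ∈ (Finset.univ.erase n).powerset,
    ((S.card.factorial : ℝ) * ((Fintype.card N - 1 - S.card).factorial : ℝ) /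
      ((Fintype.card N).factorial : ℝ)) * (v (insert n S) - v S)

/-- `C` is a semi-algebra: `N ∈ C`, and `N∖S ∈ C` for every `S ∈ C` with `S ≠ N`. -/
def IsSemiAlgebra {N : Type} [Fintype N] [DecidableEq N]
    (C : Finset (Finset N)) : Prop :=
  Finset.univ ∈ C ∧ ∀ S ∈ C, S ≠ Finset.univ → Finset.univ \ S ∈ C

/-- `C` is hierarchical: its elements can be arranged in a sequence
`S_1, …, S_l` such that for every `k = 2, …, l`, (i) `S_1` meets `S_k`, and
(ii) some `T ∈ C` misses `S_k` and meets each of `S_1, …, S_{k−1}`.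
(Indices are `0, …, l-1` here, with `S_1` the element of index `0`.) -/
def IsHierarchy {N : Type} [DecidableEq N] (C : Finset (Finset N)) : Prop :=
  ∃ (l : ℕ) (hl : 0 < l) (S : Fin l → Finset N),
    Function.Injective S ∧ (∀ k, S k ∈ C) ∧ (∀ T ∈ C, ∃ k, S k = T) ∧
    ∀ k : Fin l, 0 < (k : ℕ) →
      ((S ⟨0, hl⟩ ∩ S k).Nonempty ∧
       ∃ T ∈ C, T ∩ S k = ∅ ∧
         ∀ j : Fin l, (j : ℕ) < (k : ℕ) → (T ∩ S j).Nonempty)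

/-- Players `i` and `j` are symmetric in the game `v : C → ℝ`. -/
def SymmetricPlayers {N : Type} [DecidableEq N] (C : Finset (Finset N))
    (v : {T : Finset N // T ∈ C} → ℝ) (i j : N) : Prop :=
  ∀ T : Finset N, i ∉ T → j ∉ T →
    (insert i T ∈ C ↔ insert j T ∈ C) ∧
    ∀ (hi : insert i T ∈ C) (hj : insert j T ∈ C),
      v ⟨insert i T, hi⟩ = v ⟨insert j T, hj⟩

/-- Player `i` is a dummy in the game `v : C → ℝ`. -/
def DummyPlayer {N : Type} [DecidableEq N] (C : Finset (Finset N))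
    (v : {T : Finset N // T ∈ C} → ℝ) (i : N) : Prop :=
  (∀ h : ({i} : Finset N) ∈ C, v ⟨{i}, h⟩ = 0) ∧
  ∀ T : Finset N, T.Nonempty → i ∉ T →
    (insert i T ∈ C ↔ T ∈ C) ∧
    ∀ (hiT : insert i T ∈ C) (hT : T ∈ C), v ⟨insert i T, hiT⟩ = v ⟨T, hT⟩

/-! A representation `(ψ, γ)` of `v` writes `v = ∑_S c(S) • w_S` in the MM-games, where `c(S)` is
the total weight of the facilities with full user-set `S`, and `τ_i = ∑_{S ∋ i} c(S) / |S|`.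
Withdrawing the dummy `i` from every facility gives another representation of `v`, one in which
no user-set contains `i`. The MM-games being linearly independent, both have the same
coefficients, so `c(S) = 0` whenever `i ∈ S`, and `τ_i = 0`. -/

section

variable {N K : Type}

theorem mem_userSet [Fintype N] {ψ : N → Finset K} {k : K} {n : N} :
    n ∈ userSet ψ k ↔ k ∈ ψ n := by
  simp [userSet]

theorem biUnion_eq_filter_userSet_inter_nonempty [Fintype N] [DecidableEq N] (ψ : N → Finset K)
    (T : Finset N) :
    T.biUnion ψ = (univ.biUnion ψ).filter fun k => (userSet ψ k ∩ T).Nonempty := by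
  ext k
  simp only [mem_biUnion, mem_filter, mem_univ, true_and, Finset.Nonempty, mem_inter,
    mem_userSet]
  exact ⟨fun ⟨n, hn, hk⟩ => ⟨⟨n, hk⟩, n, hk, hn⟩, fun ⟨_, n, hk, hn⟩ => ⟨n, hn, hk⟩⟩

theorem userSet_update_empty [Fintype N] [DecidableEq N] (ψ : N → Finset K) (i : N) (k : K) :
    userSet (Function.update ψ i ∅) k = (userSet ψ k).erase i := by
  ext n
  by_cases hn : n = i <;> simp [userSet, hn]

theorem biUnion_update_empty [DecidableEq N] (ψ : N → Finset K) (i : N) (T : Finset N) :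
    T.biUnion (Function.update ψ i ∅) = (T.erase i).biUnion ψ := by
  ext k
  simp only [mem_biUnion, mem_erase]
  constructor
  · rintro ⟨n, hn, hk⟩
    by_cases hni : n = i
    · simp [hni] at hk
    · exact ⟨n, ⟨hni, hn⟩, by simpa [hni] using hk⟩
  · rintro ⟨n, ⟨hni, hn⟩, hk⟩
    exact ⟨n, hn, by simpa [hni] using hk⟩

noncomputable def repCoeff [Fintype N] [DecidableEq N] (ψ : N → Finset K) (γ : K → ℝ)
    (S : Finset N) : ℝ :=
  ∑ k ∈ (univ.biUnion ψ).filter (fun k => userSet ψ k = S), γ k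

theorem repCoeff_update_empty_eq_zero [Fintype N] [DecidableEq N] (ψ : N → Finset K)
    (γ : K → ℝ) {i : N} {S : Finset N} (hi : i ∈ S) :
    repCoeff (Function.update ψ i ∅) γ S = 0 := by
  refine sum_eq_zero fun k hk => absurd hi ?_
  rw [← (mem_filter.mp hk).2, userSet_update_empty]
  exact notMem_erase i _

theorem tau_eq_sum_repCoeff [Fintype N] [DecidableEq N] (ψ : N → Finset K) (γ : K → ℝ) (n : N) :
    tau ψ γ n = ∑ S ∈ (ψ n).image (userSet ψ), repCoeff ψ γ S / S.card := by
  rw [tau, ← sum_fiberwise_of_maps_to fun k hk => mem_image_of_mem (userSet ψ) hk]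
  refine sum_congr rfl fun S hS => ?_
  have hnS : n ∈ S := by
    obtain ⟨k, hk, rfl⟩ := mem_image.mp hS
    exact mem_userSet.mpr hk
  have hfiber : (univ.biUnion ψ).filter (fun k => userSet ψ k = S) =
      (ψ n).filter (fun k => userSet ψ k = S) := by
    ext k
    simp only [mem_filter, mem_biUnion, mem_univ, true_and]
    constructor
    · rintro ⟨-, rfl⟩
      exact ⟨mem_userSet.mp hnS, rfl⟩
    · rintro ⟨hk, rfl⟩
      exact ⟨⟨n, hk⟩, rfl⟩
  rw [repCoeff, hfiber, sum_div]
  exact sum_congr rfl fun k hk => by rw [(mem_filter.mp hk).2]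

variable [DecidableEq N] {C : Finset (Finset N)} {v : {T : Finset N // T ∈ C} → ℝ}

theorem IsRep.eq_sum_smul_mmGame [Fintype N] {ψ : N → Finset K} {γ : K → ℝ}
    (h : IsRep C v ψ γ) :
    v = ∑ S : {S // S ∈ C}, repCoeff ψ γ S • mmGame C S := by
  funext T
  rw [h.2 T, biUnion_eq_filter_userSet_inter_nonempty, sum_filter,
    ← sum_fiberwise_of_maps_to h.1, ← sum_coe_sort C]
  simp only [Finset.sum_apply, Pi.smul_apply, smul_eq_mul, mmGame, repCoeff, sum_mul]
  refine sum_congr rfl fun S _ => sum_congr rfl fun k hk => ?_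
  rw [(mem_filter.mp hk).2]
  split_ifs <;> simp

theorem DummyPlayer.erase_mem {i : N} (hdum : DummyPlayer C v i) {T : Finset N} (hT : T ∈ C)
    (hne : (T.erase i).Nonempty) : T.erase i ∈ C := by
  by_cases hi : i ∈ T
  · exact ((hdum.2 _ hne (notMem_erase i T)).1).mp (by rwa [insert_erase hi])
  · rwa [erase_eq_of_notMem hi]

theorem DummyPlayer.apply_eq_apply_erase {i : N} (hdum : DummyPlayer C v i) {T : Finset N}
    (hT : T ∈ C) (hne : (T.erase i).Nonempty) :
    v ⟨T, hT⟩ = v ⟨T.erase i, hdum.erase_mem hT hne⟩ := by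
  by_cases hi : i ∈ T
  · have hins : insert i (T.erase i) = T := insert_erase hi
    rw [← (hdum.2 _ hne (notMem_erase i T)).2 (by rwa [hins])]
    exact congrArg v (Subtype.ext hins.symm)
  · exact congrArg v (Subtype.ext (erase_eq_of_notMem hi).symm)

theorem IsRep.update_empty_of_dummyPlayer [Fintype N] {ψ : N → Finset K} {γ : K → ℝ} {i : N}
    (hrep : IsRep C v ψ γ) (hdum : DummyPlayer C v i) :
    IsRep C v (Function.update ψ i ∅) γ := by
  refine ⟨fun k hk => ?_, fun ⟨T, hT⟩ => ?_⟩
  · have hne : ((userSet ψ k).erase i).Nonempty := by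
      obtain ⟨n, -, hn⟩ := mem_biUnion.mp hk
      exact ⟨n, by rw [← userSet_update_empty]; exact mem_userSet.mpr hn⟩
    have hk' : k ∈ univ.biUnion ψ := by
      obtain ⟨n, hn⟩ := hne
      exact mem_biUnion.mpr ⟨n, mem_univ n, mem_userSet.mp (mem_of_mem_erase hn)⟩
    rw [userSet_update_empty]
    exact hdum.erase_mem (hrep.1 k hk') hne
  rw [biUnion_update_empty]
  rcases (T.erase i).eq_empty_or_nonempty with hempty | hne
  · rcases erase_eq_empty_iff T i |>.mp hempty with rfl | rfl
    · simpa using hrep.2 ⟨∅, hT⟩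
    · simpa [hempty] using hdum.1 hT
  · rw [hdum.apply_eq_apply_erase hT hne]
    exact hrep.2 _

end

theorem equitable_dummy_general {N : Type} [Fintype N] [DecidableEq N]
    (C : Finset (Finset N))
    (hfs : FullSpan C) (v : {T : Finset N // T ∈ C} → ℝ)
    (i : N) (hdum : DummyPlayer C v i)
    {K : Type} (ψ : N → Finset K) (γ : K → ℝ) (hrep : IsRep C v ψ γ) :
    tau ψ γ i = 0 := by
  have hrep' := hrep.update_empty_of_dummyPlayer hdum
  have hcoeff : ∀ S : {S // S ∈ C},
      repCoeff ψ γ S = repCoeff (Function.update ψ i ∅) γ S :=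
    Fintype.linearIndependent_iffₛ.mp hfs.1 _ _
      (hrep.eq_sum_smul_mmGame.symm.trans hrep'.eq_sum_smul_mmGame)
  rw [tau_eq_sum_repCoeff]
  refine sum_eq_zero fun S hS => ?_
  obtain ⟨k, hk, rfl⟩ := mem_image.mp hS
  have hkK : k ∈ univ.biUnion ψ := mem_biUnion.mpr ⟨i, mem_univ i, hk⟩
  rw [hcoeff ⟨_, hrep.1 k hkK⟩, repCoeff_update_empty_eq_zero ψ γ (mem_userSet.mpr hk),
    zero_div]

/-- If `C` has full span and player `i` is a dummy in the game
`v : C → ℝ`, then the equitable solution `χ(v)` (the common value of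
`τ(ψ, γ)` across representations `(ψ, γ)` of `v`) satisfies `χ_i(v) = 0`. -/
theorem equitable_dummy {N : Type} [Fintype N] [DecidableEq N] [Nonempty N]
    (C : Finset (Finset N)) (hCne : C.Nonempty)
    (hmem : ∀ S ∈ C, S.Nonempty) (hcover : ∀ n : N, ∃ S ∈ C, n ∈ S)
    (hfs : FullSpan C) (v : {T : Finset N // T ∈ C} → ℝ)
    (i : N) (hdum : DummyPlayer C v i)
    {K : Type} (ψ : N → Finset K) (γ : K → ℝ) (hrep : IsRep C v ψ γ) :
    tau ψ γ i = 0 :=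
  equitable_dummy_general C hfs v i hdum ψ γ hrep
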